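/- arXiv:math/0606384 — 7 statements merged into one kernel-verified Lean document; each statement's English description precedes it below -/
import Mathlib

section
/- Let α and β be algebraic units in ℂ. If [ℚ(β):ℚ] = [ℚ(αβ):ℚ] = [ℚ(α)(β):ℚ(α)], then α^n = 1 or α^n = -1, where n = [ℚ(β):ℚ]. -/
/-
Let `K = ℚ(α)` and `n = [ℚ(β):ℚ]`. The degree hypotheses force the minimal polynomials of `β` and
`αβ` over `K` to be their minimal polynomials over `ℚ`. Over `K`, the minimal polynomial of
`αβ = α • β` is that of `β` with its roots scaled by `α`, so its constant term is `αⁿ` times that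
of `β`. Both constant terms are `±1` because `β` and `αβ` are algebraic units, hence `αⁿ = ±1`.
-/

open Polynomial IntermediateField

/-- An algebraic unit: root of a monic integer polynomial with constant term ±1. -/
def IsAlgebraicUnit (α : ℂ) : Prop :=
  ∃ p : Polynomial ℤ, p.Monic ∧ (p.coeff 0 = 1 ∨ p.coeff 0 = -1) ∧ Polynomial.aeval α p = 0

/-- The degree of α over ℚ, i.e. [ℚ(α):ℚ]. -/
noncomputable def degQ (α : ℂ) : ℕ := (minpoly ℚ α).natDegree

namespace IsAlgebraicUnit

variable {γ : ℂ}

theorem isIntegral (h : IsAlgebraicUnit γ) : IsIntegral ℤ γ :=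
  let ⟨p, hp, _, hγ⟩ := h
  ⟨p, hp, hγ⟩

theorem ne_zero (h : IsAlgebraicUnit γ) : γ ≠ 0 := by
  rintro rfl
  obtain ⟨p, -, hp0, hp⟩ := h
  rw [← coeff_zero_eq_aeval_zero'] at hp
  rcases hp0 with h | h <;> simp [h] at hp

theorem isIntegral_inv (h : IsAlgebraicUnit γ) : IsIntegral ℤ γ⁻¹ := by
  obtain ⟨p, -, hp0, hp⟩ := id h
  have : Invertible γ := invertibleOfNonzero h.ne_zero
  have hrev : aeval γ⁻¹ p.reverse = 0 := by
    rwa [aeval_def, ← invOf_eq_inv, eval₂_reverse_eq_zero_iff, ← aeval_def]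
  have := isIntegral_leadingCoeff_smul _ _ hrev
  rw [reverse_leadingCoeff,
    trailingCoeff_eq_coeff_zero (by rcases hp0 with h | h <;> simp [h])] at this
  rcases hp0 with h | h <;> simpa [h] using this

theorem isUnit_coeff_zero_minpoly (h : IsAlgebraicUnit γ) : IsUnit ((minpoly ℤ γ).coeff 0) := by
  obtain ⟨p, -, hp0, hp⟩ := id h
  refine isUnit_of_dvd_unit
    (map_dvd constantCoeff (minpoly.isIntegrallyClosed_dvd h.isIntegral hp)) ?_
  rcases hp0 with h | h <;> simp [h]

theorem coeff_zero_minpoly_rat_eq_one_or_neg_one (h : IsAlgebraicUnit γ) :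
    (minpoly ℚ γ).coeff 0 = 1 ∨ (minpoly ℚ γ).coeff 0 = -1 := by
  rw [minpoly.isIntegrallyClosed_eq_field_fractions' ℚ h.isIntegral, coeff_map]
  rcases Int.isUnit_iff.mp h.isUnit_coeff_zero_minpoly with h | h <;> simp [h]

theorem of_isIntegral_inv (h : IsIntegral ℤ γ) (h' : IsIntegral ℤ γ⁻¹) (h0 : γ ≠ 0) :
    IsAlgebraicUnit γ := by
  refine ⟨minpoly ℤ γ, minpoly.monic h, Int.isUnit_iff.mp ?_, minpoly.aeval ℤ γ⟩
  have : Invertible γ⁻¹ := invertibleOfNonzero (inv_ne_zero h0)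
  have hrev : aeval γ (minpoly ℤ γ⁻¹).reverse = 0 := by
    have := (eval₂_reverse_eq_zero_iff (algebraMap ℤ ℂ) γ⁻¹ _).mpr (minpoly.aeval ℤ γ⁻¹)
    rwa [invOf_eq_inv, inv_inv, ← aeval_def] at this
  refine isUnit_of_dvd_unit (map_dvd constantCoeff (minpoly.isIntegrallyClosed_dvd h hrev)) ?_
  simp [coeff_zero_reverse, (minpoly.monic h').leadingCoeff]

theorem mul {δ : ℂ} (hγ : IsAlgebraicUnit γ) (hδ : IsAlgebraicUnit δ) :
    IsAlgebraicUnit (γ * δ) :=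
  of_isIntegral_inv (hγ.isIntegral.mul hδ.isIntegral)
    (mul_inv γ δ ▸ hγ.isIntegral_inv.mul hδ.isIntegral_inv) (mul_ne_zero hγ.ne_zero hδ.ne_zero)

end IsAlgebraicUnit

namespace minpoly

variable {F E L : Type*} [Field F] [Field E] [Field L] [Algebra F E] [Algebra F L] [Algebra E L]
  [IsScalarTower F E L]

theorem eq_map_of_natDegree_eq {x : L} (hx : IsIntegral F x)
    (h : (minpoly E x).natDegree = (minpoly F x).natDegree) :
    minpoly E x = (minpoly F x).map (algebraMap F E) :=
  (eq_of_monic_of_dvd_of_natDegree_le (monic hx.tower_top) ((monic hx).map _)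
    (dvd_map_of_isScalarTower F E x) (by rw [natDegree_map, h])).symm

theorem algebraMap_coeff_zero_smul_of_natDegree_eq {x : L} (hx : IsIntegral F x) {c : E}
    (hc : c ≠ 0)
    (hxE : (minpoly E x).natDegree = (minpoly F x).natDegree)
    (hcx : (minpoly F (c • x)).natDegree = (minpoly F x).natDegree) :
    algebraMap F E ((minpoly F (c • x)).coeff 0) =
      algebraMap F E ((minpoly F x).coeff 0) * c ^ (minpoly F x).natDegree := by
  have hcx_int : IsIntegral F (c • x) := by
    by_contra h
    rw [eq_zero h, natDegree_zero] at hcx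
    exact (natDegree_pos hx).ne hcx
  have hsmul := IsIntegrallyClosed.minpoly_smul hc hx.tower_top
  have hcxE := eq_map_of_natDegree_eq (F := F) (E := E) hcx_int
    (by rw [hsmul, natDegree_scaleRoots, hxE, hcx])
  rw [← coeff_map (algebraMap F E), ← hcxE, hsmul, coeff_scaleRoots,
    eq_map_of_natDegree_eq hx hxE, coeff_map, natDegree_map, Nat.sub_zero]

end minpoly

theorem stmt_0 (α β : ℂ) (hα : IsAlgebraicUnit α) (hβ : IsAlgebraicUnit β)
    (h1 : degQ β = degQ (α * β))
    (h2 : degQ β = (minpoly (↥ℚ⟮α⟯) β).natDegree) :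
    α ^ (degQ β) = 1 ∨ α ^ (degQ β) = -1 := by
  have hgen : AdjoinSimple.gen ℚ α ≠ 0 := ne_of_apply_ne (algebraMap ℚ⟮α⟯ ℂ) <| by
    rw [AdjoinSimple.algebraMap_gen, map_zero]
    exact hα.ne_zero
  have key := congrArg (algebraMap ℚ⟮α⟯ ℂ) <| minpoly.algebraMap_coeff_zero_smul_of_natDegree_eq
    hβ.isIntegral.tower_top hgen h2.symm h1.symm
  have hsmul : AdjoinSimple.gen ℚ α • β = α * β := rfl
  simp only [map_mul, map_pow, ← IsScalarTower.algebraMap_apply, AdjoinSimple.algebraMap_gen,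
    hsmul] at key
  rcases (hα.mul hβ).coeff_zero_minpoly_rat_eq_one_or_neg_one with h | h <;>
    rcases hβ.coeff_zero_minpoly_rat_eq_one_or_neg_one with h' | h' <;>
    simp [h, h', eq_comm (a := (1 : ℂ)), eq_comm (a := (-1 : ℂ)), neg_eq_iff_eq_neg] at key <;>
    simp [degQ, key]
end

section
/- Let α and β be algebraic units in ℂ. If [ℚ(α):ℚ] = [ℚ(β):ℚ] = m and [ℚ(αβ)(α):ℚ(αβ)] = m, then (αβ)^m = 1 or (αβ)^m = -1. -/
open Polynomial IntermediateField

/-!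
Put `γ = αβ` and `K = ℚ(γ)`. Since `β = γ / α`, the number `α` is a root of
`Xᵐ · r(γ / X) ∈ K[X]`, where `r` is the minimal polynomial of `β` over `ℚ`. This polynomial has
degree `m`, leading coefficient `r(0) = ±1` and constant term `γᵐ`, so it is `r(0)` times the
minimal polynomial of `α` over `K`. As `[K(α) : K] = [ℚ(α) : ℚ]`, that minimal polynomial is the one
over `ℚ`, with constant term `±1`; comparing constant terms gives `γᵐ = ±1`.
-/

namespace IsAlgebraicUnit

variable {α : ℂ}

theorem isIntegral_int (h : IsAlgebraicUnit α) : IsIntegral ℤ α := by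
  obtain ⟨p, hp, -, hpα⟩ := h
  exact ⟨p, hp, hpα⟩

theorem isUnit_coeff_zero_minpoly_int (h : IsAlgebraicUnit α) :
    IsUnit ((minpoly ℤ α).coeff 0) := by
  obtain ⟨p, hp, hp0, hpα⟩ := h
  obtain ⟨q, rfl⟩ := minpoly.isIntegrallyClosed_dvd ⟨p, hp, hpα⟩ hpα
  refine isUnit_of_mul_isUnit_left (y := q.coeff 0) ?_
  rw [← mul_coeff_zero]
  rcases hp0 with h | h <;> simp [h]

theorem coeff_zero_minpoly (h : IsAlgebraicUnit α) :
    (minpoly ℚ α).coeff 0 = 1 ∨ (minpoly ℚ α).coeff 0 = -1 := by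
  rw [minpoly.isIntegrallyClosed_eq_field_fractions' ℚ h.isIntegral_int, coeff_map]
  rcases Int.isUnit_iff.mp h.isUnit_coeff_zero_minpoly_int with h | h <;> simp [h]

end IsAlgebraicUnit

theorem minpoly_eq_map_of_natDegree_le {F K A : Type*} [Field F] [Field K] [Ring A]
    [Algebra F K] [Algebra F A] [Algebra K A] [IsScalarTower F K A] {x : A}
    (hx : IsIntegral F x) (h : (minpoly F x).natDegree ≤ (minpoly K x).natDegree) :
    minpoly K x = (minpoly F x).map (algebraMap F K) :=
  (eq_of_monic_of_dvd_of_natDegree_le (minpoly.monic hx.tower_top) ((minpoly.monic hx).map _)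
    (minpoly.dvd_map_of_isScalarTower F K x) (by rwa [natDegree_map])).symm

namespace Polynomial

variable {K E : Type*} [Field K] [Field E] [Algebra K E]

-- `r.reverse.scaleRoots g` is `Xⁿ r(g / X)` for `n = deg r`.
theorem aeval_reverse_scaleRoots_eq_zero {r : K[X]} {x y : E} {g : K}
    (hxy : x * y = algebraMap K E g) (hy : y ≠ 0) (hry : aeval y r = 0) :
    aeval x (r.reverse.scaleRoots g) = 0 := by
  let _ : Invertible y := invertibleOfNonzero hy
  have hrev : aeval y⁻¹ r.reverse = 0 := by
    rw [aeval_def, ← invOf_eq_inv, eval₂_reverse_eq_zero_iff, ← aeval_def, hry]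
  have hx : x = algebraMap K E g * y⁻¹ := by rw [← hxy, mul_inv_cancel_right₀ hy]
  rw [hx]
  exact scaleRoots_aeval_eq_zero hrev

theorem pow_natDegree_eq_coeff_zero_mul_coeff_zero_minpoly {r : K[X]} (hr : r.Monic)
    (hr0 : r.coeff 0 ≠ 0) {x y : E} {g : K} (hxy : x * y = algebraMap K E g)
    (hry : aeval y r = 0) (hdeg : r.natDegree ≤ (minpoly K x).natDegree) :
    g ^ r.natDegree = r.coeff 0 * (minpoly K x).coeff 0 := by
  have hy : y ≠ 0 := by
    rintro rfl
    rw [aeval_def, eval₂_at_zero, map_eq_zero] at hry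
    exact hr0 hry
  have htrail : r.natTrailingDegree = 0 := natTrailingDegree_eq_zero.mpr (.inr hr0)
  set s := r.reverse.scaleRoots g
  have hs_natDegree : s.natDegree = r.natDegree := by
    rw [natDegree_scaleRoots, reverse_natDegree, htrail, Nat.sub_zero]
  have hs_leadingCoeff : s.leadingCoeff = r.coeff 0 := by
    rw [leadingCoeff_scaleRoots, reverse_leadingCoeff, trailingCoeff_eq_coeff_zero hr0]
  have hs_coeff_zero : s.coeff 0 = g ^ r.natDegree := by
    rw [coeff_scaleRoots, coeff_zero_reverse, hr.leadingCoeff, one_mul, Nat.sub_zero,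
      reverse_natDegree, htrail, Nat.sub_zero]
  have hsx : aeval x s = 0 := aeval_reverse_scaleRoots_eq_zero hxy hy hry
  have hs0 : s ≠ 0 := fun h ↦ hr0 (by rw [← hs_leadingCoeff, h, leadingCoeff_zero])
  have hx : IsIntegral K x := IsAlgebraic.isIntegral ⟨s, hs0, hsx⟩
  have hs : s = C (r.coeff 0) * minpoly K x := by
    rw [← hs_leadingCoeff]
    exact eq_leadingCoeff_mul_of_monic_of_dvd_of_natDegree_le (minpoly.monic hx)
      (minpoly.dvd K x hsx) (hs_natDegree.trans_le hdeg)
  rw [← hs_coeff_zero, hs, mul_coeff_zero, coeff_C_zero]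

end Polynomial

theorem stmt_1 (α β : ℂ) (m : ℕ) (hα : IsAlgebraicUnit α) (hβ : IsAlgebraicUnit β)
    (h1 : degQ α = m) (h2 : degQ β = m)
    (h3 : (minpoly (↥ℚ⟮α * β⟯) α).natDegree = m) :
    (α * β) ^ m = 1 ∨ (α * β) ^ m = -1 := by
  set K := ℚ⟮α * β⟯
  have hmin : minpoly K α = (minpoly ℚ α).map (algebraMap ℚ K) :=
    minpoly_eq_map_of_natDegree_le hα.isIntegral_int.tower_top (h1.trans h3.symm).le
  have hr0 : ((minpoly ℚ β).map (algebraMap ℚ K)).coeff 0 ≠ 0 := by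
    rw [coeff_map, _root_.map_ne_zero]
    rcases hβ.coeff_zero_minpoly with h | h <;> simp [h]
  have key := pow_natDegree_eq_coeff_zero_mul_coeff_zero_minpoly
    ((minpoly.monic hβ.isIntegral_int.tower_top).map _) hr0
    (AdjoinSimple.algebraMap_gen ℚ (α * β)).symm (by rw [aeval_map_algebraMap, minpoly.aeval])
    (by rw [natDegree_map, h3]; exact h2.le)
  rw [natDegree_map, ← degQ, h2, hmin, coeff_map, coeff_map, ← map_mul] at key
  have hpow : (α * β) ^ m = algebraMap ℚ ℂ ((minpoly ℚ β).coeff 0 * (minpoly ℚ α).coeff 0) := by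
    rw [← AdjoinSimple.algebraMap_gen ℚ (α * β), ← map_pow, key,
      ← IsScalarTower.algebraMap_apply]
  rcases hα.coeff_zero_minpoly with ha | ha <;> rcases hβ.coeff_zero_minpoly with hb | hb <;>
    simp [hpow, ha, hb]
end

section
/- Let α and β be algebraic units in ℂ. If [ℚ(α):ℚ] = [ℚ(β):ℚ] =: m and m is coprime to [ℚ(αβ):ℚ], then (αβ)^m = 1 or (αβ)^m = -1. -/
open Polynomial IntermediateField

lemma aux_unit (α : ℂ) (h : IsAlgebraicUnit α) :
    IsIntegral ℚ α ∧ ((minpoly ℚ α).coeff 0 = 1 ∨ (minpoly ℚ α).coeff 0 = -1) := by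
  obtain ⟨p, hm, hc, hev⟩ := h
  have hiZ : IsIntegral ℤ α := ⟨p, hm, by rwa [← Polynomial.aeval_def]⟩
  have hiQ : IsIntegral ℚ α := hiZ.tower_top
  refine ⟨hiQ, ?_⟩
  obtain ⟨r, hr⟩ : minpoly ℤ α ∣ p := minpoly.isIntegrallyClosed_dvd hiZ hev
  have h0 : p.coeff 0 = (minpoly ℤ α).coeff 0 * r.coeff 0 := by
    rw [hr, Polynomial.mul_coeff_zero]
  have hu : IsUnit ((minpoly ℤ α).coeff 0) := by
    have : IsUnit (p.coeff 0) := by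
      rcases hc with h | h <;> rw [h]
      · exact isUnit_one
      · exact IsUnit.neg isUnit_one
    rw [h0] at this
    exact isUnit_of_mul_isUnit_left this
  have heq : minpoly ℚ α = (minpoly ℤ α).map (algebraMap ℤ ℚ) :=
    minpoly.isIntegrallyClosed_eq_field_fractions' ℚ hiZ
  rcases Int.isUnit_iff.mp hu with h | h <;>
    simp [heq, Polynomial.coeff_map, h]

/-- Over a field `K ⊆ ℂ` with `[K:ℚ]` coprime to `deg δ`, the minimal polynomial of `δ`
over `K` is the base change of the one over `ℚ`. -/
lemma aux_minpoly_map {K : Type*} [Field K] [Algebra ℚ K] [Algebra K ℂ]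
    [IsScalarTower ℚ K ℂ] [FiniteDimensional ℚ K] (δ : ℂ) (hδ : IsIntegral ℚ δ)
    (hcop : Nat.Coprime ((minpoly ℚ δ).natDegree) (Module.finrank ℚ K)) :
    minpoly K δ = (minpoly ℚ δ).map (algebraMap ℚ K) := by
  set m := (minpoly ℚ δ).natDegree with hm
  have hδK : IsIntegral K δ := hδ.tower_top
  have hdvd : minpoly K δ ∣ (minpoly ℚ δ).map (algebraMap ℚ K) :=
    minpoly.dvd_map_of_isScalarTower ℚ K δ
  have hdle : (minpoly K δ).natDegree ≤ m := by
    have := Polynomial.natDegree_le_of_dvd hdvd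
      (((minpoly.monic hδ).map (algebraMap ℚ K)).ne_zero)
    rwa [Polynomial.natDegree_map] at this
  haveI : FiniteDimensional K K⟮δ⟯ := adjoin.finiteDimensional hδK
  haveI : FiniteDimensional ℚ K⟮δ⟯ := FiniteDimensional.trans ℚ K K⟮δ⟯
  have hfr : Module.finrank K K⟮δ⟯ = (minpoly K δ).natDegree := adjoin.finrank hδK
  have hgen : minpoly ℚ (AdjoinSimple.gen K δ) = minpoly ℚ δ := by
    rw [← minpoly.algebraMap_eq (algebraMap K⟮δ⟯ ℂ).injective, AdjoinSimple.algebraMap_gen]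
  have hdvd2 : m ∣ Module.finrank ℚ K⟮δ⟯ := by
    rw [hm, ← hgen]
    exact minpoly.degree_dvd (IsIntegral.of_finite ℚ _)
  rw [← Module.finrank_mul_finrank ℚ K K⟮δ⟯, hfr] at hdvd2
  have hmd : m ∣ (minpoly K δ).natDegree := hcop.dvd_of_dvd_mul_left hdvd2
  have hdeq : (minpoly K δ).natDegree = m :=
    le_antisymm hdle (Nat.le_of_dvd (minpoly.natDegree_pos hδK) hmd)
  refine Polynomial.eq_of_dvd_of_natDegree_le_of_leadingCoeff hdvd ?_ ?_
  · rw [Polynomial.natDegree_map, ← hm, hdeq]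
  · rw [(minpoly.monic hδK).leadingCoeff, ((minpoly.monic hδ).map (algebraMap ℚ K)).leadingCoeff]

/-- Norm of an element whose minimal polynomial has degree the full rank. -/
lemma aux_norm {K : Type*} [Field K] [CharZero K] [Algebra K ℂ] (δ : ℂ)
    {L : Type*} [Field L] [Algebra K L] [Algebra L ℂ] [IsScalarTower K L ℂ]
    [FiniteDimensional K L] (x : L) (hx : algebraMap L ℂ x = δ)
    (hdeg : (minpoly K δ).natDegree = Module.finrank K L) :
    Algebra.norm K x = (-1) ^ (Module.finrank K L) * (minpoly K δ).coeff 0 := by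
  have hxint : IsIntegral K x := IsIntegral.of_finite K x
  have hmx : minpoly K x = minpoly K δ := by
    rw [← hx, minpoly.algebraMap_eq (algebraMap L ℂ).injective]
  haveI : FiniteDimensional K K⟮x⟯ := adjoin.finiteDimensional hxint
  have hfr : Module.finrank K K⟮x⟯ = Module.finrank K L := by
    rw [adjoin.finrank hxint, hmx, hdeg]
  have hone : Module.finrank (↥K⟮x⟯) L = 1 := by
    have h := Module.finrank_mul_finrank K (↥K⟮x⟯) L
    rw [hfr] at h
    have hpos : 0 < Module.finrank K L := Module.finrank_pos
    exact mul_left_cancel₀ hpos.ne' (h.trans (mul_one _).symm)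
  rw [Algebra.norm_eq_norm_adjoin K x, hone, pow_one]
  have h := Algebra.PowerBasis.norm_gen_eq_coeff_zero_minpoly
    (IntermediateField.adjoin.powerBasis hxint)
  rw [IntermediateField.adjoin.powerBasis_gen, IntermediateField.adjoin.powerBasis_dim,
    IntermediateField.minpoly_gen, hmx, hdeg] at h
  exact h

theorem stmt_2 (α β : ℂ) (m : ℕ) (hα : IsAlgebraicUnit α) (hβ : IsAlgebraicUnit β)
    (h1 : degQ α = m) (h2 : degQ β = m)
    (h3 : Nat.Coprime m (degQ (α * β))) :
    (α * β) ^ m = 1 ∨ (α * β) ^ m = -1 := by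
  obtain ⟨hintα, hcα⟩ := aux_unit α hα
  obtain ⟨hintβ, hcβ⟩ := aux_unit β hβ
  set γ : ℂ := α * β with hγ
  have hintγ : IsIntegral ℚ γ := hintα.mul hintβ
  -- α ≠ 0
  have hα0 : α ≠ 0 := by
    rintro rfl
    obtain ⟨p, hm, hc, hev⟩ := hα
    rw [Polynomial.aeval_def, Polynomial.eval₂_at_zero] at hev
    rcases hc with h | h <;> rw [h] at hev <;> simp at hev
  set K := ℚ⟮γ⟯ with hK
  haveI : FiniteDimensional ℚ K := adjoin.finiteDimensional hintγ
  haveI : CharZero K := charZero_of_injective_algebraMap (algebraMap ℚ K).injective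
  have hn : Module.finrank ℚ K = degQ γ := adjoin.finrank hintγ
  have hcopα : Nat.Coprime ((minpoly ℚ α).natDegree) (Module.finrank ℚ K) := by
    have hh : (minpoly ℚ α).natDegree = m := h1
    rw [hn, hh]; exact h3
  have hcopβ : Nat.Coprime ((minpoly ℚ β).natDegree) (Module.finrank ℚ K) := by
    have hh : (minpoly ℚ β).natDegree = m := h2
    rw [hn, hh]; exact h3
  have hmα := aux_minpoly_map (K := K) α hintα hcopα
  have hmβ := aux_minpoly_map (K := K) β hintβ hcopβ
  have hdα : (minpoly K α).natDegree = m := by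
    rw [hmα, Polynomial.natDegree_map]; exact h1
  have hdβ : (minpoly K β).natDegree = m := by
    rw [hmβ, Polynomial.natDegree_map]; exact h2
  have hintKα : IsIntegral K α := hintα.tower_top
  set L := K⟮α⟯ with hLdef
  haveI : FiniteDimensional K L := adjoin.finiteDimensional hintKα
  have hfrL : Module.finrank K L = m := by rw [adjoin.finrank hintKα, hdα]
  -- elements of L
  set αL : L := AdjoinSimple.gen K α with hαL
  have hαLval : algebraMap L ℂ αL = α := AdjoinSimple.algebraMap_gen K α
  have hγK : γ ∈ K := mem_adjoin_simple_self ℚ γ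
  set γK : K := ⟨γ, hγK⟩ with hγKdef
  have hγKval : algebraMap K ℂ γK = γ := rfl
  set γL : L := algebraMap K L γK with hγL
  have hγLval : algebraMap L ℂ γL = γ := by
    rw [hγL, ← IsScalarTower.algebraMap_apply, hγKval]
  have hαL0 : αL ≠ 0 := by
    intro h
    apply hα0
    rw [← hαLval, h, map_zero]
  set βL : L := γL * αL⁻¹ with hβL
  have hβLval : algebraMap L ℂ βL = β := by
    rw [hβL, map_mul, map_inv₀, hγLval, hαLval, hγ]
    field_simp
  have hprod : αL * βL = γL := by
    rw [hβL]
    field_simp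
  -- norms
  have hnormα : Algebra.norm K αL = (-1) ^ m * (minpoly K α).coeff 0 := by
    have := aux_norm (K := K) α αL hαLval (by rw [hdα, hfrL])
    rwa [hfrL] at this
  have hnormβ : Algebra.norm K βL = (-1) ^ m * (minpoly K β).coeff 0 := by
    have := aux_norm (K := K) β βL hβLval (by rw [hdβ, hfrL])
    rwa [hfrL] at this
  have hnormγ : Algebra.norm K γL = γK ^ m := by
    rw [hγL, Algebra.norm_algebraMap, hfrL]
  -- constant coefficients are ±1 in K
  have hcKα : (minpoly K α).coeff 0 = 1 ∨ (minpoly K α).coeff 0 = -1 := by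
    rcases hcα with h | h <;> [left; right] <;>
      simp [hmα, Polynomial.coeff_map, h]
  have hcKβ : (minpoly K β).coeff 0 = 1 ∨ (minpoly K β).coeff 0 = -1 := by
    rcases hcβ with h | h <;> [left; right] <;>
      simp [hmβ, Polynomial.coeff_map, h]
  have hmain : γK ^ m = (minpoly K α).coeff 0 * (minpoly K β).coeff 0 := by
    have h := congrArg (Algebra.norm K) hprod
    rw [map_mul, hnormα, hnormβ, hnormγ] at h
    rw [← h, mul_mul_mul_comm, ← mul_pow, neg_mul_neg, one_mul, one_pow, one_mul]
  have hfin : γK ^ m = 1 ∨ γK ^ m = -1 := by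
    rcases hcKα with h | h <;> rcases hcKβ with h' | h' <;>
      simp [hmain, h, h']
  have : (algebraMap K ℂ) (γK ^ m) = γ ^ m := by
    rw [map_pow, hγKval]
  rcases hfin with h | h
  · left; rw [← this, h, map_one]
  · right; rw [← this, h, map_neg, map_one]
end

section
/- Let α and β be algebraic units in ℂ with [ℚ(α):ℚ] < [ℚ(β):ℚ]. Then [ℚ(αβ):ℚ] is not coprime to [ℚ(β):ℚ]. -/
open Polynomial IntermediateField

/-!
Put `K = ℚ(αβ)`. Since `β = αβ · α⁻¹`, the field `K(α)` contains `β`, so `[ℚ(β):ℚ]` divides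
`[K(α):ℚ] = [ℚ(αβ):ℚ] · [K(α):K]`. As `0 < [K(α):K] ≤ [ℚ(α):ℚ] < [ℚ(β):ℚ]`, the degree of `β`
cannot divide `[K(α):K]`, so it shares a factor with `[ℚ(αβ):ℚ]`.
-/

theorem Nat.not_coprime_of_dvd_mul_of_pos_of_lt {a d m : ℕ} (hdvd : d ∣ a * m) (hm : 0 < m)
    (hmd : m < d) : ¬ a.Coprime d := fun hcop =>
  (Nat.le_of_dvd hm (hcop.symm.dvd_of_dvd_mul_left hdvd)).not_gt hmd

section

variable {F L : Type*} [Field F] [Field L] [Algebra F L]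

theorem minpoly.natDegree_le_of_isScalarTower (K : Type*) [Field K] [Algebra F K] [Algebra K L]
    [IsScalarTower F K L] {x : L} (hx : IsIntegral F x) :
    (minpoly K x).natDegree ≤ (minpoly F x).natDegree := by
  calc (minpoly K x).natDegree ≤ ((minpoly F x).map (algebraMap F K)).natDegree :=
        natDegree_le_of_dvd (minpoly.dvd_map_of_isScalarTower F K x)
          ((Polynomial.map_ne_zero_iff (algebraMap F K).injective).mpr (minpoly.ne_zero hx))
    _ = (minpoly F x).natDegree := natDegree_map _

theorem IntermediateField.natDegree_minpoly_dvd_finrank (E : IntermediateField F L)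
    [FiniteDimensional F E] {y : L} (hy : y ∈ E) :
    (minpoly F y).natDegree ∣ Module.finrank F E := by
  have hdvd := minpoly.degree_dvd (Algebra.IsIntegral.isIntegral (R := F) (⟨y, hy⟩ : E))
  rwa [← minpoly.algebraMap_eq (algebraMap E L).injective] at hdvd

theorem exists_natDegree_minpoly_dvd_natDegree_minpoly_mul_mul {x y : L} (hx : IsIntegral F x)
    (hy : IsIntegral F y) (hx0 : x ≠ 0) :
    ∃ m, 0 < m ∧ m ≤ (minpoly F x).natDegree ∧
      (minpoly F y).natDegree ∣ (minpoly F (x * y)).natDegree * m := by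
  set K := F⟮x * y⟯
  have hxy : IsIntegral F (x * y) := hx.mul hy
  have hxK : IsIntegral K x := hx.tower_top
  have : FiniteDimensional F K := adjoin.finiteDimensional hxy
  have : FiniteDimensional K K⟮x⟯ := adjoin.finiteDimensional hxK
  have : FiniteDimensional F K⟮x⟯ := Module.Finite.trans K _
  have hy_mem : y ∈ K⟮x⟯ := by
    have hxy_mem : x * y ∈ K⟮x⟯ :=
      IntermediateField.algebraMap_mem K⟮x⟯ (⟨x * y, mem_adjoin_simple_self F (x * y)⟩ : K)
    have hy_eq : y = x * y * x⁻¹ := by field_simp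
    rw [hy_eq]
    exact mul_mem hxy_mem (inv_mem (mem_adjoin_simple_self K x))
  refine ⟨Module.finrank K K⟮x⟯, Module.finrank_pos, ?_, ?_⟩
  · rw [adjoin.finrank hxK]
    exact minpoly.natDegree_le_of_isScalarTower K hx
  · have : FiniteDimensional F (K⟮x⟯.restrictScalars F) := ‹FiniteDimensional F K⟮x⟯›
    have hdvd : (minpoly F y).natDegree ∣ Module.finrank F K⟮x⟯ :=
      natDegree_minpoly_dvd_finrank (K⟮x⟯.restrictScalars F) hy_mem
    have : Module.Free K K⟮x⟯ := Module.Free.of_divisionRing K K⟮x⟯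
    rwa [← Module.finrank_mul_finrank F K K⟮x⟯, adjoin.finrank hxy] at hdvd

end

theorem IsAlgebraicUnit.isIntegral_s5 {α : ℂ} (h : IsAlgebraicUnit α) : IsIntegral ℚ α := by
  obtain ⟨p, hmonic, -, hroot⟩ := h
  have hℤ : IsIntegral ℤ α := ⟨p, hmonic, by rwa [aeval_def] at hroot⟩
  exact hℤ.tower_top

theorem IsAlgebraicUnit.ne_zero_s5 {α : ℂ} (h : IsAlgebraicUnit α) : α ≠ 0 := by
  obtain ⟨p, -, hcoeff, hroot⟩ := h
  rintro rfl
  rw [aeval_def, eval₂_at_zero] at hroot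
  have h0 : p.coeff 0 = 0 := by simpa using hroot
  rcases hcoeff with hcoeff | hcoeff <;> omega

theorem stmt_5 (α β : ℂ) (hα : IsAlgebraicUnit α) (hβ : IsAlgebraicUnit β)
    (hlt : degQ α < degQ β) :
    ¬ Nat.Coprime (degQ (α * β)) (degQ β) := by
  obtain ⟨m, hm, hmα, hdvd⟩ :=
    exists_natDegree_minpoly_dvd_natDegree_minpoly_mul_mul hα.isIntegral_s5 hβ.isIntegral_s5 hα.ne_zero_s5
  exact Nat.not_coprime_of_dvd_mul_of_pos_of_lt hdvd hm (hmα.trans_lt hlt)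
end

section
/- Let α be an algebraic unit with [ℚ(α):ℚ] = 6 and let β be a root of the minimal polynomial of α over ℚ (a conjugate of α). If [ℚ(αβ)(α):ℚ(αβ)] = 3, then (αβ)^3 = 1 or (αβ)^3 = -1. -/
open Polynomial IntermediateField

lemma aeval_cubic {F : Type*} [Field F] [Algebra F ℂ] (f : F[X]) (hm : f.Monic)
    (hd : f.natDegree = 3) (x : ℂ) :
    aeval x f = x ^ 3 + algebraMap F ℂ (f.coeff 2) * x ^ 2
      + algebraMap F ℂ (f.coeff 1) * x + algebraMap F ℂ (f.coeff 0) := by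
  have h3 : f.coeff 3 = 1 := by have := hm.coeff_natDegree; rwa [hd] at this
  rw [aeval_eq_sum_range, hd]
  simp [Finset.sum_range_succ, Algebra.smul_def, h3]
  ring

set_option maxHeartbeats 1000000 in
set_option synthInstance.maxHeartbeats 400000 in
theorem stmt_8 (α β : ℂ) (hα : IsAlgebraicUnit α) (h6 : degQ α = 6)
    (hβ : Polynomial.aeval β (minpoly ℚ α) = 0)
    (h3 : (minpoly (↥ℚ⟮α * β⟯) α).natDegree = 3) :
    (α * β) ^ 3 = 1 ∨ (α * β) ^ 3 = -1 := by
  classical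
  obtain ⟨q, hqm, hq0, hqroot⟩ := hα
  have hint : IsIntegral ℤ α := ⟨q, hqm, hqroot⟩
  have hintQ : IsIntegral ℚ α := hint.tower_top
  set p := minpoly ℚ α with hpdef
  have hpm : p.Monic := minpoly.monic hintQ
  -- the constant coefficient of p is ±1
  obtain ⟨r, hr⟩ := minpoly.isIntegrallyClosed_dvd hint hqroot
  have hcd : (minpoly ℤ α).coeff 0 ∣ q.coeff 0 := ⟨r.coeff 0, by rw [hr, mul_coeff_zero]⟩
  have hunit : IsUnit ((minpoly ℤ α).coeff 0) := by
    rcases hq0 with h | h <;> rw [h] at hcd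
    · exact isUnit_of_dvd_one hcd
    · exact isUnit_of_dvd_unit hcd (by simp)
  have hp0' : (minpoly ℤ α).coeff 0 = 1 ∨ (minpoly ℤ α).coeff 0 = -1 := Int.isUnit_iff.mp hunit
  have hpfrac : p = (minpoly ℤ α).map (algebraMap ℤ ℚ) :=
    minpoly.isIntegrallyClosed_eq_field_fractions' ℚ hint
  have hpz : p.coeff 0 = 1 ∨ p.coeff 0 = -1 := by
    rcases hp0' with h | h
    · left; rw [hpfrac, coeff_map, h]; norm_num
    · right; rw [hpfrac, coeff_map, h]; norm_num
  have hp0ne : p.coeff 0 ≠ 0 := by rcases hpz with h | h <;> rw [h] <;> norm_num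
  have hαne : α ≠ 0 := by
    rintro rfl
    apply hp0ne
    have := minpoly.aeval ℚ (0 : ℂ)
    rw [← hpdef, aeval_eq_sum_range] at this
    have h0 : ((p.coeff 0 : ℂ)) = 0 := by
      simpa [Finset.sum_range_succ'] using this
    exact_mod_cast h0
  have hβne : β ≠ 0 := by
    rintro rfl
    apply hp0ne
    rw [aeval_eq_sum_range] at hβ
    have h0 : ((p.coeff 0 : ℂ)) = 0 := by
      simpa [Finset.sum_range_succ'] using hβ
    exact_mod_cast h0
  set K := ℚ⟮α * β⟯ with hK
  set g : K := ⟨α * β, mem_adjoin_simple_self ℚ (α * β)⟩ with hg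
  have hgc : algebraMap K ℂ g = α * β := rfl
  have hgne : g ≠ 0 := by
    intro h
    apply mul_ne_zero hαne hβne
    rw [← hgc, h, map_zero]
  have hintK : IsIntegral K α := hintQ.tower_top
  set m := minpoly K α with hmdef
  have hmm : m.Monic := minpoly.monic hintK
  have hirr : Irreducible m := minpoly.irreducible hintK
  set p' := p.map (algebraMap ℚ K) with hp'
  obtain ⟨n, hn⟩ : m ∣ p' := minpoly.dvd K α (by rw [aeval_map_algebraMap]; exact minpoly.aeval ℚ α)
  have hp'm : p'.Monic := hpm.map _
  have hnm : n.Monic := hmm.of_mul_monic_left (hn ▸ hp'm)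
  have hnd : n.natDegree = 3 := by
    have h1 : p'.natDegree = 6 := by
      rw [hp', hpm.natDegree_map]; exact h6
    have h2 : p'.natDegree = m.natDegree + n.natDegree := by
      rw [hn, hmm.natDegree_mul hnm]
    rw [h1, h3] at h2
    omega
  have hsplit : aeval β m * aeval β n = 0 := by
    have h0 : aeval β p' = 0 := by rw [hp', aeval_map_algebraMap]; exact hβ
    rw [hn, map_mul] at h0; exact h0
  -- key lemma: the reversed-scaled polynomial
  have key : ∀ f : K[X], f.Monic → f.natDegree = 3 → aeval β f = 0 →
      g ^ 3 = m.coeff 0 * f.coeff 0 ∧ f.coeff 2 * g ^ 2 = m.coeff 1 * f.coeff 0 ∧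
      f.coeff 1 * g = m.coeff 2 * f.coeff 0 := by
    intro f hfm hfd hfβ
    set ft : K[X] := C (g ^ 3) + C (f.coeff 2 * g ^ 2) * X + C (f.coeff 1 * g) * X ^ 2
        + C (f.coeff 0) * X ^ 3 with hft
    have hc0 : ft.coeff 0 = g ^ 3 := by
      simp only [hft, coeff_add, coeff_C_mul, coeff_X_pow, coeff_C, coeff_X]; norm_num
    have hc1 : ft.coeff 1 = f.coeff 2 * g ^ 2 := by
      simp only [hft, coeff_add, coeff_C_mul, coeff_X_pow, coeff_C, coeff_X]; norm_num
    have hc2 : ft.coeff 2 = f.coeff 1 * g := by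
      simp only [hft, coeff_add, coeff_C_mul, coeff_X_pow, coeff_C, coeff_X]; norm_num
    have hc3 : ft.coeff 3 = f.coeff 0 := by
      simp only [hft, coeff_add, coeff_C_mul, coeff_X_pow, coeff_C, coeff_X]; norm_num
    have hdeg : ft.natDegree ≤ 3 := by
      rw [hft]
      compute_degree
    have hroot : aeval α ft = 0 := by
      have h1 : aeval α ft = α ^ 3 * aeval β f := by
        rw [aeval_cubic f hfm hfd β]
        simp only [hft, map_add, map_mul, aeval_C, aeval_X, aeval_X_pow, map_pow, map_mul, hgc]
        ring
      rw [h1, hfβ, mul_zero]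
    obtain ⟨u, hu⟩ := minpoly.dvd K α hroot
    by_cases hu0 : u = 0
    · exfalso
      have hz : ft = 0 := by rw [hu, hu0, mul_zero]
      apply hgne
      have : g ^ 3 = 0 := by rw [← hc0, hz, coeff_zero]
      exact pow_eq_zero_iff (by norm_num) |>.mp this
    · have hdu : u.natDegree = 0 := by
        have hnd : ft.natDegree = m.natDegree + u.natDegree := by
          rw [hu, natDegree_mul hmm.ne_zero hu0]
        rw [h3] at hnd
        omega
      have hcu : u = C (u.coeff 0) := eq_C_of_natDegree_eq_zero hdu
      have hueq : ft = m * C (u.coeff 0) := by rw [hu, ← hcu]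
      have hm3 : m.coeff 3 = 1 := by
        have := hmm.coeff_natDegree; rwa [h3] at this
      have hval : u.coeff 0 = f.coeff 0 := by
        have := congrArg (fun q => Polynomial.coeff q 3) hueq
        simp only [coeff_mul_C, hm3, one_mul] at this
        rw [hc3] at this
        exact this.symm
      refine ⟨?_, ?_, ?_⟩
      · have := congrArg (fun q => Polynomial.coeff q 0) hueq
        simp only [coeff_mul_C, hval] at this
        rw [hc0] at this; exact this
      · have := congrArg (fun q => Polynomial.coeff q 1) hueq
        simp only [coeff_mul_C, hval] at this
        rw [hc1] at this; exact this
      · have := congrArg (fun q => Polynomial.coeff q 2) hueq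
        simp only [coeff_mul_C, hval] at this
        rw [hc2] at this; exact this
  rcases mul_eq_zero.mp hsplit with hmβ | hnβ
  · -- β is a root of m : impossible
    exfalso
    obtain ⟨e1, e2, e3⟩ := key m hmm h3 hmβ
    obtain ⟨s, hs⟩ := IsAlgClosed.exists_pow_nat_eq (k := ℂ) (α * β) two_pos
    have E1 : (s ^ 2) ^ 3 = algebraMap K ℂ (m.coeff 0) ^ 2 := by
      rw [hs, ← hgc, ← map_pow, ← map_pow, e1, ← sq]
    have E2 : algebraMap K ℂ (m.coeff 2) * (s ^ 2) ^ 2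
        = algebraMap K ℂ (m.coeff 1) * algebraMap K ℂ (m.coeff 0) := by
      rw [hs, ← hgc, ← map_pow, ← map_mul, e2, map_mul]
    have E3 : algebraMap K ℂ (m.coeff 1) * s ^ 2
        = algebraMap K ℂ (m.coeff 2) * algebraMap K ℂ (m.coeff 0) := by
      rw [hs, ← hgc, ← map_mul, e3, map_mul]
    have hprod : aeval s m * aeval (-s) m = 0 := by
      rw [aeval_cubic m hmm h3 s, aeval_cubic m hmm h3 (-s)]
      linear_combination (-1 : ℂ) * E1 + algebraMap K ℂ (m.coeff 2) * E2
        + (-(algebraMap K ℂ (m.coeff 1)) - 2 * s ^ 2) * E3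
    have hcontra : ∀ r : ℂ, r ^ 2 = α * β → aeval r m = 0 → False := by
      intro r hr2 hrm
      have hminr : minpoly K r = m := (minpoly.eq_of_irreducible_of_monic hirr hrm hmm).symm
      have hdvd2 : minpoly K r ∣ (X ^ 2 - C g) := minpoly.dvd K r (by
        rw [map_sub, aeval_X_pow, aeval_C, hgc, hr2, sub_self])
      have hne : (X ^ 2 - C g : K[X]) ≠ 0 := X_pow_sub_C_ne_zero two_pos g
      have hle := natDegree_le_of_dvd hdvd2 hne
      rw [hminr, h3, natDegree_X_pow_sub_C] at hle
      omega
    rcases mul_eq_zero.mp hprod with h | h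
    · exact hcontra s hs h
    · exact hcontra (-s) (by rw [neg_sq]; exact hs) h
  · -- β is a root of n : conclude
    obtain ⟨e1, _, _⟩ := key n hnm hnd hnβ
    have hc : m.coeff 0 * n.coeff 0 = algebraMap ℚ K (p.coeff 0) := by
      have h0 : p'.coeff 0 = m.coeff 0 * n.coeff 0 := by rw [hn, mul_coeff_zero]
      rw [← h0, hp', coeff_map]
    have hg3 : g ^ 3 = algebraMap ℚ K (p.coeff 0) := by rw [e1, hc]
    have hfin : (α * β) ^ 3 = algebraMap ℚ ℂ (p.coeff 0) := by
      rw [← hgc, ← map_pow, hg3, ← IsScalarTower.algebraMap_apply]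
    rcases hpz with h | h
    · left; rw [hfin, h, map_one]
    · right; rw [hfin, h]; norm_num
end

section
/- Let β₁, β₂, β₃ be the three distinct roots in ℂ of an irreducible monic cubic polynomial over ℤ with constant term ±1. Let λ and μ be real algebraic units of degree 2 over ℚ. If the multiset {μβ₁, μβ₂, μβ₃, μ⁻¹β₁, μ⁻¹β₂, μ⁻¹β₃} equals the multiset {λβ₁, λβ₂, λβ₃, λ⁻¹β₁, λ⁻¹β₂, λ⁻¹β₃}, then μ = λ or μ = λ⁻¹. -/
open Polynomial IntermediateField

theorem stmt_9 (p : Polynomial ℤ) (hmonic : p.Monic) (hdeg : p.natDegree = 3)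
    (hirr : Irreducible p) (hconst : p.coeff 0 = 1 ∨ p.coeff 0 = -1)
    (β₁ β₂ β₃ : ℂ)
    (hroots : (p.aroots ℂ) = {β₁, β₂, β₃})
    (hne : β₁ ≠ β₂ ∧ β₁ ≠ β₃ ∧ β₂ ≠ β₃)
    (lam mu : ℂ) (hlr : lam.im = 0) (hmr : mu.im = 0)
    (hl : IsAlgebraicUnit lam) (hm : IsAlgebraicUnit mu)
    (hld : degQ lam = 2) (hmd : degQ mu = 2)
    (hset : ({mu * β₁, mu * β₂, mu * β₃, mu⁻¹ * β₁, mu⁻¹ * β₂, mu⁻¹ * β₃} : Multiset ℂ) =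
      ({lam * β₁, lam * β₂, lam * β₃, lam⁻¹ * β₁, lam⁻¹ * β₂, lam⁻¹ * β₃} : Multiset ℂ)) :
    mu = lam ∨ mu = lam⁻¹ := by
  -- nonvanishing of lam and mu
  have hl0 : lam ≠ 0 := by
    intro h0; rw [h0] at hld; simp [degQ, minpoly.zero] at hld
  have hm0 : mu ≠ 0 := by
    intro h0; rw [h0] at hmd; simp [degQ, minpoly.zero] at hmd
  have hinvl : lam * lam⁻¹ = 1 := mul_inv_cancel₀ hl0
  have hinvm : mu * mu⁻¹ = 1 := mul_inv_cancel₀ hm0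
  -- Vieta for p
  have hq : p.map (algebraMap ℤ ℂ) = X^3 - C β₁ * X^2 - C β₂ * X^2 - C β₃ * X^2
      + C (β₁*β₂) * X + C (β₁*β₃) * X + C (β₂*β₃) * X - C (β₁*β₂*β₃) := by
    have hndeg : (p.map (algebraMap ℤ ℂ)).natDegree = 3 := by
      rw [hmonic.natDegree_map, hdeg]
    have hc : Multiset.card (p.map (algebraMap ℤ ℂ)).roots
        = (p.map (algebraMap ℤ ℂ)).natDegree := by
      rw [show (p.map (algebraMap ℤ ℂ)).roots = p.aroots ℂ from rfl, hroots, hndeg]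
      rfl
    have := prod_multiset_X_sub_C_of_monic_of_roots_card_eq (hmonic.map _) hc
    rw [show (p.map (algebraMap ℤ ℂ)).roots = p.aroots ℂ from rfl, hroots] at this
    rw [← this]
    simp only [Multiset.insert_eq_cons, Multiset.map_cons, Multiset.map_singleton,
      Multiset.prod_cons, Multiset.prod_singleton, C_mul]
    ring
  have hc2 : (p.coeff 2 : ℂ) = -(β₁ + β₂ + β₃) := by
    have := congrArg (fun q => q.coeff 2) hq
    simp only [coeff_map, coeff_add, coeff_sub, coeff_X_pow, coeff_C_mul, coeff_C,
      coeff_mul_X, coeff_X_zero, coeff_X_one] at this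
    simp only [algebraMap_int_eq, eq_intCast] at this
    norm_num at this
    linear_combination this
  have hc1 : (p.coeff 1 : ℂ) = β₁*β₂ + β₁*β₃ + β₂*β₃ := by
    have := congrArg (fun q => q.coeff 1) hq
    simp only [coeff_map, coeff_add, coeff_sub, coeff_X_pow, coeff_C_mul, coeff_C,
      coeff_mul_X, coeff_X_zero, coeff_X_one] at this
    simp only [algebraMap_int_eq, eq_intCast] at this
    norm_num at this
    linear_combination this
  have hc0 : (p.coeff 0 : ℂ) = -(β₁*β₂*β₃) := by
    have := congrArg (fun q => q.coeff 0) hq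
    simp only [coeff_map, coeff_add, coeff_sub, coeff_X_pow, coeff_C_mul, coeff_C,
      coeff_mul_X, coeff_X_zero, coeff_X_one] at this
    simp only [algebraMap_int_eq, eq_intCast] at this
    norm_num at this
    linear_combination this
  -- power sum equalities from the multiset equality
  have e1 : (mu + mu⁻¹) * (β₁ + β₂ + β₃) = (lam + lam⁻¹) * (β₁ + β₂ + β₃) := by
    have := congrArg Multiset.sum hset
    simp only [Multiset.insert_eq_cons, Multiset.sum_cons, Multiset.sum_singleton] at this
    linear_combination this
  have e2 : (mu^2 + mu⁻¹^2) * (β₁^2 + β₂^2 + β₃^2)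
      = (lam^2 + lam⁻¹^2) * (β₁^2 + β₂^2 + β₃^2) := by
    have := congrArg (fun m => (m.map (fun x => x^2)).sum) hset
    simp only [Multiset.insert_eq_cons, Multiset.map_cons, Multiset.map_singleton,
      Multiset.sum_cons, Multiset.sum_singleton] at this
    linear_combination this
  have e3 : (mu^3 + mu⁻¹^3) * (β₁^3 + β₂^3 + β₃^3)
      = (lam^3 + lam⁻¹^3) * (β₁^3 + β₂^3 + β₃^3) := by
    have := congrArg (fun m => (m.map (fun x => x^3)).sum) hset
    simp only [Multiset.insert_eq_cons, Multiset.map_cons, Multiset.map_singleton,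
      Multiset.sum_cons, Multiset.sum_singleton] at this
    linear_combination this
  -- it suffices to show mu + mu⁻¹ = lam + lam⁻¹
  have key : (mu + mu⁻¹) = (lam + lam⁻¹) → mu = lam ∨ mu = lam⁻¹ := by
    intro hts
    have h : (mu - lam) * (mu - lam⁻¹) = 0 := by
      linear_combination mu * hts - hinvm + hinvl
    rcases mul_eq_zero.mp h with h | h
    · exact Or.inl (sub_eq_zero.mp h)
    · exact Or.inr (sub_eq_zero.mp h)
  by_cases hS1z : β₁ + β₂ + β₃ = 0
  · by_cases hS2z : β₁^2 + β₂^2 + β₃^2 = 0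
    · -- then p = X^3 ± 1 is reducible: contradiction
      exfalso
      have hc2z : p.coeff 2 = 0 := by
        have : (p.coeff 2 : ℂ) = 0 := by rw [hc2, hS1z, neg_zero]
        exact_mod_cast this
      have hc1z : p.coeff 1 = 0 := by
        have hx : (p.coeff 1 : ℂ) = 0 := by
          rw [hc1]
          linear_combination ((β₁ + β₂ + β₃)/2) * hS1z - (1/2) * hS2z
        exact_mod_cast hx
      have hc3 : p.coeff 3 = 1 := by
        have := hmonic.coeff_natDegree; rwa [hdeg] at this
      -- p has integer root 1 or -1
      have hroot : ∃ r : ℤ, p.IsRoot r := by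
        rcases hconst with h0 | h0
        · exact ⟨-1, by
            have hev := Polynomial.eval_eq_sum_range (x := (-1 : ℤ)) (p := p)
            rw [hdeg] at hev
            simp [Polynomial.IsRoot, hev, Finset.sum_range_succ, hc2z, hc1z, h0, hc3]⟩
        · exact ⟨1, by
            have hev := Polynomial.eval_eq_sum_range (x := (1 : ℤ)) (p := p)
            rw [hdeg] at hev
            simp [Polynomial.IsRoot, hev, Finset.sum_range_succ, hc2z, hc1z, h0, hc3]⟩
      obtain ⟨r, hr⟩ := hroot
      obtain ⟨q, hfact⟩ := (dvd_iff_isRoot).mpr hr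
      have hq0 : q ≠ 0 := by
        intro h
        rw [h, mul_zero] at hfact
        exact hmonic.ne_zero hfact
      rcases hirr.isUnit_or_isUnit hfact with hu | hu
      · have := natDegree_eq_zero_of_isUnit hu
        rw [natDegree_X_sub_C] at this
        exact absurd this one_ne_zero
      · have := natDegree_eq_zero_of_isUnit hu
        have hdq : p.natDegree = (X - C r).natDegree + q.natDegree :=
          hfact ▸ natDegree_mul (X_sub_C_ne_zero r) hq0
        rw [hdeg, natDegree_X_sub_C, this] at hdq
        omega
    · -- S2 ≠ 0 branch
      have ht2 : mu^2 + mu⁻¹^2 = lam^2 + lam⁻¹^2 := mul_right_cancel₀ hS2z e2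
      have hS3v : β₁^3 + β₂^3 + β₃^3 = 3 * (β₁*β₂*β₃) := by
        linear_combination (β₁^2 + β₂^2 + β₃^2 - β₁*β₂ - β₁*β₃ - β₂*β₃) * hS1z
      have hS3z : β₁^3 + β₂^3 + β₃^3 ≠ 0 := by
        rw [hS3v]
        have hb : (β₁*β₂*β₃) = -(p.coeff 0 : ℂ) := by linear_combination hc0
        rcases hconst with h0 | h0 <;> rw [hb, h0] <;> norm_num
      have ht3 : mu^3 + mu⁻¹^3 = lam^3 + lam⁻¹^3 := mul_right_cancel₀ hS3z e3
      -- now work with t = mu + mu⁻¹, s = lam + lam⁻¹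
      have hsq : (mu + mu⁻¹)^2 = (lam + lam⁻¹)^2 := by
        linear_combination ht2 + 2 * hinvm - 2 * hinvl
      have hcu : (mu + mu⁻¹)^3 - 3 * (mu + mu⁻¹) = (lam + lam⁻¹)^3 - 3 * (lam + lam⁻¹) := by
        linear_combination ht3 + 3 * (mu + mu⁻¹) * hinvm - 3 * (lam + lam⁻¹) * hinvl
      by_cases hts : mu + mu⁻¹ = lam + lam⁻¹
      · exact key hts
      · exfalso
        have hneg : mu + mu⁻¹ = -(lam + lam⁻¹) := by
          have h : (mu + mu⁻¹ - (lam + lam⁻¹)) * (mu + mu⁻¹ + (lam + lam⁻¹)) = 0 := by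
            linear_combination hsq
          rcases mul_eq_zero.mp h with h | h
          · exact absurd (sub_eq_zero.mp h) hts
          · linear_combination h
        -- so 2s(s^2-3) = 0 with s = lam + lam⁻¹
        have hs : (lam + lam⁻¹) * ((lam + lam⁻¹)^2 - 3) = 0 := by
          rw [hneg] at hcu
          linear_combination (-1/2) * hcu
        rcases mul_eq_zero.mp hs with h | h
        · exact hts (by rw [hneg, h, neg_zero])
        · -- (lam + lam⁻¹)^2 = 3 impossible for real lam
          have h3 : (lam + lam⁻¹)^2 = 3 := by linear_combination h
          set r : ℝ := lam.re with hrdef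
          have hlam : lam = (r : ℂ) := Complex.ext rfl (by simp [hlr])
          have hr0 : r ≠ 0 := by
            intro h0; apply hl0; rw [hlam, h0]; simp
          have h3r : (r + r⁻¹)^2 = 3 := by
            have : ((r + r⁻¹ : ℝ) : ℂ)^2 = 3 := by
              push_cast
              rw [← hlam]; exact h3
            exact_mod_cast this
          have hrinv : r * r⁻¹ = 1 := mul_inv_cancel₀ hr0
          have hrsq : 0 < r^2 := by positivity
          nlinarith [sq_nonneg (r^2 - 1), sq_nonneg (r^2 + 1), sq_nonneg (r - r⁻¹)]
  · exact key (mul_right_cancel₀ hS1z e1)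
end

section
/- Let α and β be algebraic units with [ℚ(α):ℚ] = 3 and [ℚ(β):ℚ] = 3, and suppose αβ has degree 2 over ℚ. Then (αβ)^3 = ±1. -/
/-!
Let `F = ℚ(αβ)`, a quadratic field. Since `[F : ℚ] = 2` is coprime to `3`, the minimal
polynomials of `α` and `β` over `F` are still their rational ones, with constant terms `±1`.
Writing `g = αβ ∈ F`, we have `β = g α⁻¹`, and the minimal polynomial of `β` over `F` is
obtained from that of `α` by reversing it and scaling the roots by `g`. Comparing constant
terms gives `c_α c_β = g ^ 3`, and both constant terms are `±1`.
-/

open Polynomial IntermediateField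

namespace minpoly

variable {F L : Type*} [Field F] [Field L] [Algebra F L] {x : L}

theorem dvd_C_mul_reverse_of_inv (hx0 : x ≠ 0) :
    minpoly F x⁻¹ ∣ C ((minpoly F x).coeff 0)⁻¹ * (minpoly F x).reverse := by
  refine minpoly.dvd F x⁻¹ ?_
  let := invertibleOfNonzero hx0
  rw [map_mul, ← invOf_eq_inv]
  refine mul_eq_zero_of_right _ ?_
  rw [aeval_def, eval₂_reverse_eq_zero_iff, ← aeval_def, minpoly.aeval]

theorem natDegree_inv_le (hx : IsIntegral F x) (hx0 : x ≠ 0) :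
    (minpoly F x⁻¹).natDegree ≤ (minpoly F x).natDegree :=
  calc (minpoly F x⁻¹).natDegree
      ≤ (C ((minpoly F x).coeff 0)⁻¹ * (minpoly F x).reverse).natDegree :=
        natDegree_le_of_dvd (dvd_C_mul_reverse_of_inv hx0) <| mul_ne_zero
          (inv_ne_zero (coeff_zero_ne_zero hx hx0) |> C_ne_zero.mpr)
          (reverse_eq_zero.not.mpr (minpoly.ne_zero hx))
    _ ≤ (minpoly F x).reverse.natDegree := natDegree_C_mul_le _ _
    _ ≤ (minpoly F x).natDegree := reverse_natDegree_le _

theorem natDegree_inv (hx : IsIntegral F x) (hx0 : x ≠ 0) :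
    (minpoly F x⁻¹).natDegree = (minpoly F x).natDegree := by
  refine le_antisymm (natDegree_inv_le hx hx0) ?_
  simpa using natDegree_inv_le hx.inv (inv_ne_zero hx0)

theorem inv (hx : IsIntegral F x) (hx0 : x ≠ 0) :
    minpoly F x⁻¹ = C ((minpoly F x).coeff 0)⁻¹ * (minpoly F x).reverse := by
  have hc : (minpoly F x).coeff 0 ≠ 0 := coeff_zero_ne_zero hx hx0
  refine (eq_of_monic_of_dvd_of_natDegree_le (minpoly.monic hx.inv) ?_
    (dvd_C_mul_reverse_of_inv hx0) ?_).symm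
  · rw [Monic, leadingCoeff_mul, leadingCoeff_C, reverse_leadingCoeff,
      trailingCoeff_eq_coeff_zero hc, inv_mul_cancel₀ hc]
  · rw [natDegree_inv hx hx0]
    exact (natDegree_C_mul_le _ _).trans (reverse_natDegree_le _)

theorem coeff_zero_inv (hx : IsIntegral F x) (hx0 : x ≠ 0) :
    (minpoly F x⁻¹).coeff 0 = ((minpoly F x).coeff 0)⁻¹ := by
  rw [inv hx hx0, coeff_C_mul, coeff_zero_reverse, (minpoly.monic hx).leadingCoeff, mul_one]

theorem coeff_zero_mul_coeff_zero_of_mul_eq_algebraMap {y : L} {g : F} (hx : IsIntegral F x)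
    (hg : g ≠ 0) (hxy : x * y = algebraMap F L g) :
    (minpoly F x).coeff 0 * (minpoly F y).coeff 0 = g ^ (minpoly F x).natDegree := by
  have hx0 : x ≠ 0 := by
    rintro rfl
    exact hg (by simpa using hxy.symm)
  have hy : y = g • x⁻¹ := by
    rw [Algebra.smul_def, ← hxy, mul_comm x, mul_inv_cancel_right₀ hx0]
  rw [hy, IsIntegrallyClosed.minpoly_smul hg hx.inv, coeff_scaleRoots, coeff_zero_inv hx hx0,
    natDegree_inv hx hx0, Nat.sub_zero, ← mul_assoc, mul_inv_cancel₀ (coeff_zero_ne_zero hx hx0),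
    one_mul]

end minpoly

theorem IntermediateField.minpoly_eq_map_of_coprime {K L : Type*} [Field K] [Field L]
    [Algebra K L] (F : IntermediateField K L) [FiniteDimensional K F] {x : L}
    (hx : IsIntegral K x) (hcop : (Module.finrank K F).Coprime (minpoly K x).natDegree) :
    minpoly F x = (minpoly K x).map (algebraMap K F) := by
  have hxF : IsIntegral F x := hx.tower_top
  have hdvd : (minpoly K x).natDegree ∣ Module.finrank K F * (minpoly F x).natDegree := by
    have : FiniteDimensional F F⟮x⟯ := adjoin.finiteDimensional hxF
    have : Module.Free F F⟮x⟯ := Module.Free.of_divisionRing F F⟮x⟯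
    have hle : K⟮x⟯ ≤ (F⟮x⟯).restrictScalars K :=
      adjoin_simple_le_iff.mpr (mem_adjoin_simple_self F x)
    rw [← adjoin.finrank hx, ← adjoin.finrank hxF, Module.finrank_mul_finrank K F F⟮x⟯]
    exact finrank_dvd_of_le_right hle
  refine (eq_of_monic_of_dvd_of_natDegree_le (minpoly.monic hxF) ((minpoly.monic hx).map _)
    (minpoly.dvd_map_of_isScalarTower K F x) ?_).symm
  rw [natDegree_map]
  exact Nat.le_of_dvd (minpoly.natDegree_pos hxF) (hcop.symm.dvd_of_dvd_mul_left hdvd)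

theorem IsAlgebraicUnit.isIntegral_s19 {x : ℂ} (hx : IsAlgebraicUnit x) : IsIntegral ℤ x :=
  let ⟨p, hm, _, hp⟩ := hx
  ⟨p, hm, hp⟩

theorem IsAlgebraicUnit.minpoly_coeff_zero {x : ℂ} (hx : IsAlgebraicUnit x) :
    (minpoly ℚ x).coeff 0 = 1 ∨ (minpoly ℚ x).coeff 0 = -1 := by
  have hxℤ := hx.isIntegral_s19
  obtain ⟨p, -, hc, hp⟩ := hx
  obtain ⟨q, rfl⟩ := minpoly.isIntegrallyClosed_dvd hxℤ hp
  have hu : IsUnit ((minpoly ℤ x).coeff 0) := by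
    refine isUnit_of_mul_isUnit_left (y := q.coeff 0) ?_
    rw [← mul_coeff_zero]
    rcases hc with h | h <;> simp [h]
  rw [minpoly.isIntegrallyClosed_eq_field_fractions' ℚ hxℤ, coeff_map]
  rcases Int.isUnit_iff.mp hu with h | h <;> simp [h]

theorem IsAlgebraicUnit.minpoly_coeff_zero_of_coprime {x : ℂ} (hx : IsAlgebraicUnit x)
    (F : IntermediateField ℚ ℂ) [FiniteDimensional ℚ F]
    (hcop : (Module.finrank ℚ F).Coprime (degQ x)) :
    (minpoly F x).coeff 0 = 1 ∨ (minpoly F x).coeff 0 = -1 := by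
  rw [F.minpoly_eq_map_of_coprime hx.isIntegral_s19.tower_top hcop, coeff_map]
  rcases hx.minpoly_coeff_zero with h | h <;> simp [h]

theorem stmt_19 (α β : ℂ) (hα : IsAlgebraicUnit α) (hβ : IsAlgebraicUnit β)
    (h1 : degQ α = 3) (h2 : degQ β = 3) (h3 : degQ (α * β) = 2) :
    (α * β) ^ 3 = 1 ∨ (α * β) ^ 3 = -1 := by
  have hαQ : IsIntegral ℚ α := hα.isIntegral_s19.tower_top
  have hγQ : IsIntegral ℚ (α * β) := hαQ.mul hβ.isIntegral_s19.tower_top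
  have hγ0 : α * β ≠ 0 := fun h => by simp [degQ, h] at h3
  let F := ℚ⟮α * β⟯
  have : FiniteDimensional ℚ F := adjoin.finiteDimensional hγQ
  have hF : Module.finrank ℚ F = 2 := (adjoin.finrank hγQ).trans h3
  have hcop : ∀ x, degQ x = 3 → (Module.finrank ℚ F).Coprime (degQ x) := fun x hx => by
    rw [hF, hx]; norm_num
  have hαF : (minpoly F α).natDegree = 3 := by
    rw [F.minpoly_eq_map_of_coprime hαQ (hcop α h1), natDegree_map]
    exact h1
  have hγ : (α * β) ^ 3 = algebraMap F ℂ ((minpoly F α).coeff 0 * (minpoly F β).coeff 0) := by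
    rw [minpoly.coeff_zero_mul_coeff_zero_of_mul_eq_algebraMap hαQ.tower_top
      (g := AdjoinSimple.gen ℚ (α * β)) (fun h => hγ0 (congrArg Subtype.val h)) rfl, hαF, map_pow]
    rfl
  rcases hα.minpoly_coeff_zero_of_coprime F (hcop α h1) with h | h <;>
    rcases hβ.minpoly_coeff_zero_of_coprime F (hcop β h2) with h' | h' <;>
    simp [hγ, h, h']
end
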